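/- For every real α ∈ (0,1) and every real v, sign(v)|v|^α = (Γ(α+1) cos(πα/2)/π) ∫_ℝ sign(ω) sin(ωv) / |ω|^(α+1) dω. -/

import Mathlib

/-!
Both sides are odd in `v` and positively homogeneous of degree `α`, so everything reduces to
`I = ∫₀^∞ sin t · t^(-α-1) dt`. Writing `Γ(α+1) t^(-α-1) = ∫₀^∞ x^α e^(-tx) dx` and using
`∫₀^∞ sin t · e^(-tx) dt = 1/(1+x²)`, Fubini gives `Γ(α+1) I = ∫₀^∞ x^α/(1+x²) dx`. Writing in turn
`1/(1+x²) = ∫₀^∞ e^(-(1+x²)s) ds`, a second application of Fubini turns this into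
`Γ((1+α)/2) Γ((1-α)/2) / 2`, which is `π / (2 cos(πα/2))` by the reflection formula.
-/

open Real MeasureTheory Set

lemma cos_pi_mul_div_two_pos {α : ℝ} (h₀ : -1 < α) (h₁ : α < 1) : 0 < cos (π * α / 2) :=
  cos_pos_of_mem_Ioo ⟨by nlinarith [pi_pos], by nlinarith [pi_pos]⟩

lemma integral_sin_mul_exp_neg_mul_Ioi {x : ℝ} (hx : 0 < x) :
    ∫ t in Ioi (0:ℝ), sin t * exp (-(t * x)) = 1 / (1 + x ^ 2) := by
  -- `sin t * exp (-(t * x))` is the imaginary part of `exp ((-x + I) * t)`.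
  have ha : (-x + Complex.I).re < 0 := by simpa using hx
  have key := integral_im (integrableOn_exp_mul_complex_Ioi ha 0)
  rw [RCLike.im_to_complex, integral_exp_mul_complex_Ioi ha 0] at key
  convert key using 1
  · refine setIntegral_congr_fun measurableSet_Ioi fun t _ => ?_
    simp [Complex.exp_im, mul_comm]
  · simp [Complex.normSq, add_comm, sq, neg_div]

lemma integrableOn_rpow_div_one_add_sq {α : ℝ} (h₀ : -1 < α) (h₁ : α < 1) :
    IntegrableOn (fun x : ℝ => x ^ α / (1 + x ^ 2)) (Ioi 0) := by
  have hmeas : Measurable (fun x : ℝ => x ^ α / (1 + x ^ 2)) := by fun_prop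
  rw [← Ioc_union_Ioi_eq_Ioi zero_le_one]
  refine IntegrableOn.union ?_ ?_
  · have hint : IntegrableOn (fun x : ℝ => x ^ α) (Ioc 0 1) :=
      (intervalIntegrable_iff_integrableOn_Ioc_of_le zero_le_one).1
        (intervalIntegral.intervalIntegrable_rpow' h₀)
    refine hint.mono' hmeas.aestronglyMeasurable ?_
    filter_upwards [ae_restrict_mem measurableSet_Ioc] with x hx
    have hx0 : 0 < x := hx.1
    rw [norm_of_nonneg (by positivity)]
    exact div_le_self (by positivity) (by nlinarith)
  · refine (integrableOn_Ioi_rpow_of_lt (by linarith : α - 2 < -1) one_pos).mono'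
      hmeas.aestronglyMeasurable ?_
    filter_upwards [ae_restrict_mem measurableSet_Ioi] with x (hx : 1 < x)
    have hx0 : 0 < x := by linarith
    rw [norm_of_nonneg (by positivity), div_le_iff₀ (by positivity), rpow_sub hx0,
      rpow_two, div_mul_eq_mul_div, le_div_iff₀ (by positivity)]
    nlinarith [rpow_pos_of_pos hx0 α]

lemma integral_exp_neg_mul_Ioi {b : ℝ} (hb : 0 < b) :
    ∫ s in Ioi (0:ℝ), exp (-b * s) = 1 / b := by
  rw [integral_exp_mul_Ioi (neg_lt_zero.2 hb)]
  simp

lemma integral_rpow_div_one_add_sq {α : ℝ} (h₀ : -1 < α) (h₁ : α < 1) :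
    ∫ x in Ioi (0:ℝ), x ^ α / (1 + x ^ 2) = π / (2 * cos (π * α / 2)) := by
  set μ := volume.restrict (Ioi (0:ℝ))
  set f : ℝ → ℝ → ℝ := fun x s => x ^ α * exp (-(1 + x ^ 2) * s)
  have hb : ∀ x : ℝ, 0 < 1 + x ^ 2 := fun x => by positivity
  have hf : ∀ x s, f x s = exp (-s) * (x ^ α * exp (-s * x ^ (2:ℝ))) := fun x s => by
    simp only [f]
    rw [rpow_two, mul_left_comm, ← exp_add]; ring_nf
  have h_inner_s : ∀ x, ∫ s, f x s ∂μ = x ^ α / (1 + x ^ 2) := fun x => by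
    rw [integral_const_mul, integral_exp_neg_mul_Ioi (hb x), mul_one_div]
  have h_inner_x : ∀ s ∈ Ioi (0:ℝ),
      ∫ x, f x s ∂μ = Gamma ((α + 1) / 2) / 2 * (exp (-s) * s ^ ((1 - α) / 2 - 1)) := by
    intro s (hs : 0 < s)
    simp_rw [hf, integral_const_mul]
    rw [integral_rpow_mul_exp_neg_mul_rpow two_pos h₀ hs]
    ring_nf
  have hint : Integrable (Function.uncurry f) (μ.prod μ) := by
    refine (integrable_prod_iff (by fun_prop)).2 ⟨.of_forall fun x => ?_, ?_⟩
    · exact (integrableOn_exp_mul_Ioi (neg_lt_zero.2 (hb x)) 0).const_mul (x ^ α)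
    · refine (integrableOn_rpow_div_one_add_sq h₀ h₁).congr_fun_ae ?_
      filter_upwards [ae_restrict_mem measurableSet_Ioi] with x (hx : 0 < x)
      rw [← h_inner_s]
      exact integral_congr_ae (.of_forall fun s => (norm_of_nonneg (by positivity)).symm)
  calc ∫ x in Ioi (0:ℝ), x ^ α / (1 + x ^ 2) = ∫ x, ∫ s, f x s ∂μ ∂μ := by
        simp_rw [h_inner_s]; rfl
    _ = ∫ s, ∫ x, f x s ∂μ ∂μ := integral_integral_swap hint
    _ = ∫ s in Ioi 0, Gamma ((α + 1) / 2) / 2 * (exp (-s) * s ^ ((1 - α) / 2 - 1)) :=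
      setIntegral_congr_fun measurableSet_Ioi h_inner_x
    _ = Gamma ((α + 1) / 2) * Gamma (1 - (α + 1) / 2) / 2 := by
      rw [integral_const_mul, ← Gamma_eq_integral (by linarith)]; ring_nf
    _ = π / (2 * cos (π * α / 2)) := by
      rw [Gamma_mul_Gamma_one_sub, show π * ((α + 1) / 2) = π * α / 2 + π / 2 by ring,
        sin_add_pi_div_two]
      ring

lemma integrableOn_sin_div_rpow {α : ℝ} (h₀ : 0 < α) (h₁ : α < 1) :
    IntegrableOn (fun t : ℝ => sin t / t ^ (α + 1)) (Ioi 0) := by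
  have hmeas : Measurable (fun t : ℝ => sin t / t ^ (α + 1)) := by fun_prop
  rw [← Ioc_union_Ioi_eq_Ioi zero_le_one]
  refine IntegrableOn.union ?_ ?_
  · have hint : IntegrableOn (fun t : ℝ => t ^ (-α)) (Ioc 0 1) :=
      (intervalIntegrable_iff_integrableOn_Ioc_of_le zero_le_one).1
        (intervalIntegral.intervalIntegrable_rpow' (by linarith))
    refine hint.mono' hmeas.aestronglyMeasurable ?_
    filter_upwards [ae_restrict_mem measurableSet_Ioc] with t ht
    have ht0 : 0 < t := ht.1
    calc ‖sin t / t ^ (α + 1)‖ = |sin t| / t ^ (α + 1) := by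
          rw [norm_div, norm_eq_abs, norm_of_nonneg (rpow_nonneg ht0.le _)]
      _ ≤ t / t ^ (α + 1) := by gcongr; exact abs_sin_le_abs.trans (abs_of_pos ht0).le
      _ = t ^ (-α) := by rw [rpow_add_one ht0.ne', rpow_neg ht0.le]; field_simp
  · refine (integrableOn_Ioi_rpow_of_lt (by linarith : -(α + 1) < -1) one_pos).mono'
      hmeas.aestronglyMeasurable ?_
    filter_upwards [ae_restrict_mem measurableSet_Ioi] with t (ht : 1 < t)
    have ht0 : 0 < t := by linarith
    calc ‖sin t / t ^ (α + 1)‖ = |sin t| / t ^ (α + 1) := by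
          rw [norm_div, norm_eq_abs, norm_of_nonneg (rpow_nonneg ht0.le _)]
      _ ≤ 1 / t ^ (α + 1) := by gcongr; exact abs_sin_le_one t
      _ = t ^ (-(α + 1)) := by rw [rpow_neg ht0.le, one_div]

lemma integral_sin_div_rpow {α : ℝ} (h₀ : 0 < α) (h₁ : α < 1) :
    ∫ t in Ioi (0:ℝ), sin t / t ^ (α + 1) = π / (2 * Gamma (α + 1) * cos (π * α / 2)) := by
  set μ := volume.restrict (Ioi (0:ℝ))
  set g : ℝ → ℝ → ℝ := fun t x => sin t * (x ^ α * exp (-(t * x)))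
  have hΓ : 0 < Gamma (α + 1) := Gamma_pos_of_pos (by linarith)
  have hcos := cos_pi_mul_div_two_pos (by linarith) h₁
  have h_gamma : ∀ t > 0, ∫ x, x ^ α * exp (-(t * x)) ∂μ = Gamma (α + 1) / t ^ (α + 1) := by
    intro t ht
    rw [← add_sub_cancel_right α 1, integral_rpow_mul_exp_neg_mul_Ioi (by linarith) ht,
      add_sub_cancel_right, one_div, inv_rpow ht.le]
    ring
  have h_inner_x : ∀ t ∈ Ioi (0:ℝ), ∫ x, g t x ∂μ = Gamma (α + 1) * (sin t / t ^ (α + 1)) := by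
    intro t (ht : 0 < t)
    rw [integral_const_mul, h_gamma t ht]
    ring
  have h_inner_t : ∀ x ∈ Ioi (0:ℝ), ∫ t, g t x ∂μ = x ^ α / (1 + x ^ 2) := by
    intro x (hx : 0 < x)
    simp_rw [g, mul_left_comm (sin _)]
    rw [integral_const_mul, integral_sin_mul_exp_neg_mul_Ioi hx, mul_one_div]
  have hint : Integrable (Function.uncurry g) (μ.prod μ) := by
    refine (integrable_prod_iff (by fun_prop)).2 ⟨?_, ?_⟩
    · filter_upwards [ae_restrict_mem measurableSet_Ioi] with t (ht : 0 < t)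
      have := integrableOn_rpow_mul_exp_neg_mul_rpow (s := α) (by linarith) one_pos ht
      simp only [rpow_one, neg_mul] at this
      exact this.const_mul (sin t)
    · refine ((integrableOn_sin_div_rpow h₀ h₁).norm.const_mul (Gamma (α + 1))).congr ?_
      filter_upwards [ae_restrict_mem measurableSet_Ioi] with t (ht : 0 < t)
      have h_norm : ∀ x ∈ Ioi (0:ℝ), ‖g t x‖ = |sin t| * (x ^ α * exp (-(t * x))) :=
        fun x (hx : 0 < x) => by rw [norm_mul, norm_eq_abs, norm_of_nonneg (by positivity)]
      change _ = ∫ x in Ioi 0, ‖g t x‖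
      rw [setIntegral_congr_fun measurableSet_Ioi h_norm, integral_const_mul, h_gamma t ht,
        norm_div, norm_eq_abs, norm_of_nonneg (by positivity)]
      ring
  have key := integral_integral_swap hint
  rw [setIntegral_congr_fun measurableSet_Ioi h_inner_x, integral_const_mul,
    setIntegral_congr_fun measurableSet_Ioi h_inner_t,
    integral_rpow_div_one_add_sq (by linarith) h₁] at key
  rw [eq_div_iff (by positivity)] at key ⊢
  linear_combination key

lemma sign_mul_sin_mul (ω v : ℝ) : sign ω * sin (ω * v) = sin (|ω| * v) := by
  rcases lt_trichotomy ω 0 with h | rfl | h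
  · rw [sign_of_neg h, abs_of_neg h, neg_one_mul, neg_mul, sin_neg]
  · simp
  · rw [sign_of_pos h, abs_of_pos h, one_mul]

lemma integral_sin_mul_div_rpow_of_pos (α : ℝ) {v : ℝ} (hv : 0 < v) :
    ∫ t in Ioi (0:ℝ), sin (t * v) / t ^ (α + 1)
      = v ^ α * ∫ t in Ioi (0:ℝ), sin t / t ^ (α + 1) := by
  have h_scale : ∀ t ∈ Ioi (0:ℝ),
      sin (t * v) / t ^ (α + 1) = v ^ (α + 1) * (sin (t * v) / (t * v) ^ (α + 1)) :=
    fun t (ht : 0 < t) => by rw [mul_rpow ht.le hv.le]; field_simp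
  rw [setIntegral_congr_fun measurableSet_Ioi h_scale, integral_const_mul,
    integral_comp_mul_right_Ioi (fun u => sin u / u ^ (α + 1)) 0 hv, zero_mul, smul_eq_mul,
    ← mul_assoc, rpow_add_one hv.ne', mul_inv_cancel_right₀ hv.ne']

lemma integral_sin_mul_div_rpow (α v : ℝ) :
    ∫ t in Ioi (0:ℝ), sin (t * v) / t ^ (α + 1)
      = sign v * |v| ^ α * ∫ t in Ioi (0:ℝ), sin t / t ^ (α + 1) := by
  rcases lt_trichotomy v 0 with h | rfl | h
  · have h_odd : ∀ t, sin (t * v) / t ^ (α + 1) = -(sin (t * -v) / t ^ (α + 1)) := fun t => by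
      rw [mul_neg, sin_neg, neg_div, neg_neg]
    simp_rw [h_odd]
    rw [integral_neg, integral_sin_mul_div_rpow_of_pos α (neg_pos.2 h), sign_of_neg h,
      abs_of_neg h, neg_one_mul, neg_mul]
  · simp
  · rw [integral_sin_mul_div_rpow_of_pos α h, sign_of_pos h, abs_of_pos h, one_mul]

theorem vonBahrEssen_sign_abs_rpow_lt_one (α : ℝ) (hα : α ∈ Set.Ioo (0:ℝ) 1) (v : ℝ) :
    Real.sign v * |v| ^ α = (Real.Gamma (α + 1) * Real.cos (π * α / 2) / π) *
      ∫ ω : ℝ, Real.sign ω * Real.sin (ω * v) / |ω| ^ (α + 1) := by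
  obtain ⟨h₀, h₁⟩ := hα
  have hΓ : 0 < Gamma (α + 1) := Gamma_pos_of_pos (by linarith)
  have hcos := cos_pi_mul_div_two_pos (by linarith) h₁
  simp_rw [sign_mul_sin_mul]
  rw [integral_comp_abs (f := fun t => sin (t * v) / t ^ (α + 1)), integral_sin_mul_div_rpow,
    integral_sin_div_rpow h₀ h₁]
  -- keeps `field_simp` from normalising the argument of `cos`
  generalize cos (π * α / 2) = c at hcos ⊢
  field_simp
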